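/- arXiv:2004.00469 — 2 statements merged into one kernel-verified Lean document; each statement's English description precedes it below -/
import Mathlib

section
/- (w⁺ regularity implies frequency convergence.) Assume A := lim_{t→∞} ℓ_t/t exists. If μ_t → μ_* in the w⁺ sense (μ_t → μ_* weakly on [0,∞] and ∫ (1/m) dμ_t → ∫ (1/m) dμ_* < ∞) with μ_* ≠ δ_∞, then A ∈ (0,∞) and F_t converges weakly to the measure F_* given by ⟨F_*, f⟩ = (1/A) ∫ (1/m) f(m) dμ_*(m) for all f ∈ C_b([0,∞]). -/
/-!
Weighting `μ_t` by the density `1/m` turns each atom `(a/t) δ_a` into `(1/t) δ_a`, so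
`μ_t.withDensity (1/m)` is `1/t` times the counting measure of the increments, whose
normalisation is `F_t`. Hence `ℓ_t/t = ∫ 1/m dμ_t` and `⟨F_t, f⟩ = (t/ℓ_t) ∫ f/m dμ_t`.
The first identity identifies `A` with `∫ 1/m dμ_*`, which is finite, and nonzero unless
`μ_* = δ_∞`. For the second, weak convergence handles the truncated weight `min (1/m) N`,
while the `w⁺` convergence makes the truncation error `‖f‖ ∫ (1/m - min (1/m) N) dμ_t`
small uniformly for large `t`.
-/

open MeasureTheory ProbabilityTheory Filter
open scoped ENNReal Topology BigOperators

noncomputable section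

/-- Partial sums of the masses: `Mpart m n = ∑_{k=1}^n m k` (with `Mpart m 0 = 0`). -/
def Mpart (m : ℕ → ℝ) (n : ℕ) : ℝ := ∑ k ∈ Finset.Icc 1 n, m k

/-- `ℓ_t = inf {ℓ : M_ℓ ≥ t}`, the index of the increment containing time `t`. -/
def ell (m : ℕ → ℝ) (t : ℝ) : ℕ := sInf {l : ℕ | t ≤ Mpart m l}

/-- `t̄ = t - M_{ℓ_t - 1}`, the elapsed part of the current increment. -/
def tbar (m : ℕ → ℝ) (t : ℝ) : ℝ := t - Mpart m (ell m t - 1)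

/-- The empirical mass measure `μ_t = (t̄/t) δ_{t̄} + ∑_{k<ℓ_t} (m_k/t) δ_{m_k}`,
as a measure on `[0,∞]` (modelled by `ℝ≥0∞`). -/
def empMass (m : ℕ → ℝ) (t : ℝ) : Measure ℝ≥0∞ :=
  ENNReal.ofReal (tbar m t / t) • Measure.dirac (ENNReal.ofReal (tbar m t)) +
  ∑ k ∈ Finset.Icc 1 (ell m t - 1),
    ENNReal.ofReal (m k / t) • Measure.dirac (ENNReal.ofReal (m k))

/-- The empirical mass frequency `F_t = (1/ℓ_t) (δ_{t̄} + ∑_{k<ℓ_t} δ_{m_k})`,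
as a measure on `[0,∞]` (modelled by `ℝ≥0∞`). -/
def empFreq (m : ℕ → ℝ) (t : ℝ) : Measure ℝ≥0∞ :=
  ((ell m t : ℝ≥0∞))⁻¹ •
    (Measure.dirac (ENNReal.ofReal (tbar m t)) +
     ∑ k ∈ Finset.Icc 1 (ell m t - 1), Measure.dirac (ENNReal.ofReal (m k)))

open scoped BoundedContinuousFunction

section Truncation

variable {X : Type*} [MeasurableSpace X]

lemma tendsto_lintegral_min_natCast (μ : Measure X) {g : X → ℝ≥0∞} (hg : AEMeasurable g μ) :
    Tendsto (fun N : ℕ => ∫⁻ x, min (g x) N ∂μ) atTop (𝓝 (∫⁻ x, g x ∂μ)) := by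
  refine lintegral_tendsto_of_tendsto_of_monotone (fun N => hg.min aemeasurable_const)
    (.of_forall fun x N K hNK => min_le_min_left _ (mod_cast hNK)) (.of_forall fun x => ?_)
  simpa [Function.comp_def] using
    ((continuous_const.min continuous_id).tendsto ∞).comp ENNReal.tendsto_nat_nhds_top

lemma abs_integral_toReal_mul_sub_integral_min_le {ν : Measure X} {g : X → ℝ≥0∞}
    (hg : Measurable g) (hν : ∫⁻ x, g x ∂ν ≠ ∞) {f : X → ℝ} (hf : AEStronglyMeasurable f ν)
    {C : ℝ} (hC : ∀ x, ‖f x‖ ≤ C) (N : ℕ) :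
    |∫ x, (g x).toReal * f x ∂ν - ∫ x, (min (g x) N).toReal * f x ∂ν| ≤
      C * ((∫⁻ x, g x ∂ν).toReal - (∫⁻ x, min (g x) N ∂ν).toReal) := by
  have hνN : ∫⁻ x, min (g x) N ∂ν ≠ ∞ :=
    ne_top_of_le_ne_top hν (lintegral_mono fun x => min_le_left _ _)
  have hgN : Measurable fun x => min (g x) N := hg.min measurable_const
  have hint := integrable_toReal_of_lintegral_ne_top hg.aemeasurable hν
  have hintN := integrable_toReal_of_lintegral_ne_top hgN.aemeasurable hνN
  have hbound : ∀ᵐ x ∂ν, ‖f x‖ ≤ C := .of_forall hC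
  rw [← integral_sub (hint.mul_bdd hf hbound) (hintN.mul_bdd hf hbound),
    ← integral_toReal hg.aemeasurable (ae_lt_top hg hν),
    ← integral_toReal hgN.aemeasurable (ae_lt_top hgN hνN), ← integral_sub hint hintN,
    ← integral_const_mul C, ← Real.norm_eq_abs]
  refine norm_integral_le_of_norm_le ((hint.sub hintN).const_mul C) ?_
  filter_upwards [ae_lt_top hg hν] with x hx
  have hle : (min (g x) N).toReal ≤ (g x).toReal := ENNReal.toReal_mono hx.ne (min_le_left _ _)
  rw [← sub_mul, norm_mul, Real.norm_of_nonneg (sub_nonneg.2 hle), mul_comm]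
  exact mul_le_mul_of_nonneg_right (hC x) (sub_nonneg.2 hle)

end Truncation

lemma min_natCast_ne_top (a : ℝ≥0∞) (N : ℕ) : min a N ≠ ∞ :=
  ((min_le_right _ _).trans_lt (ENNReal.natCast_lt_top N)).ne

section WeakPlus

variable {X : Type*} [TopologicalSpace X]

def truncToReal {g : X → ℝ≥0∞} (hg : Continuous g) (N : ℕ) : X →ᵇ ℝ :=
  .ofNormedAddCommGroup (fun x => (min (g x) N).toReal)
    (ENNReal.continuousOn_toReal.comp_continuous (hg.min continuous_const)
      fun x => min_natCast_ne_top (g x) N) N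
    fun x => by
      rw [Real.norm_of_nonneg ENNReal.toReal_nonneg, ← ENNReal.toReal_natCast N]
      exact ENNReal.toReal_mono (ENNReal.natCast_ne_top N) (min_le_right _ _)

@[simp]
lemma truncToReal_apply {g : X → ℝ≥0∞} (hg : Continuous g) (N : ℕ) (x : X) :
    truncToReal hg N x = (min (g x) N).toReal := rfl

variable [MeasurableSpace X] [OpensMeasurableSpace X]

lemma integral_truncToReal {g : X → ℝ≥0∞} (hg : Continuous g) (N : ℕ) (ν : Measure X) :
    ∫ x, truncToReal hg N x ∂ν = (∫⁻ x, min (g x) N ∂ν).toReal :=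
  integral_toReal (hg.measurable.min measurable_const).aemeasurable
    (.of_forall fun x => (min_natCast_ne_top (g x) N).lt_top)

theorem tendsto_integral_toReal_mul_of_tendsto_lintegral {ι : Type*} {l : Filter ι}
    {μs : ι → Measure X} {μ : Measure X}
    (hweak : ∀ f : X →ᵇ ℝ, Tendsto (fun i => ∫ x, f x ∂μs i) l (𝓝 (∫ x, f x ∂μ)))
    {g : X → ℝ≥0∞} (hg : Continuous g)
    (hlim : Tendsto (fun i => ∫⁻ x, g x ∂μs i) l (𝓝 (∫⁻ x, g x ∂μ)))
    (hfin : ∫⁻ x, g x ∂μ ≠ ∞) (f : X →ᵇ ℝ) :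
    Tendsto (fun i => ∫ x, (g x).toReal * f x ∂μs i) l (𝓝 (∫ x, (g x).toReal * f x ∂μ)) := by
  have hgap_lim : Tendsto (fun N : ℕ => ‖f‖ * ((∫⁻ x, g x ∂μ).toReal -
      (∫⁻ x, min (g x) N ∂μ).toReal)) atTop (𝓝 0) := by
    have := (ENNReal.tendsto_toReal hfin).comp
      (tendsto_lintegral_min_natCast μ hg.measurable.aemeasurable)
    simpa using ((tendsto_const_nhds (x := (∫⁻ x, g x ∂μ).toReal)).sub this).const_mul ‖f‖
  rw [Metric.tendsto_nhds]
  intro ε hε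
  obtain ⟨N, hN⟩ := (hgap_lim.eventually (gt_mem_nhds (by positivity : 0 < ε / 3))).exists
  have hgap_tendsto : Tendsto (fun i => ‖f‖ * ((∫⁻ x, g x ∂μs i).toReal -
      (∫⁻ x, min (g x) N ∂μs i).toReal)) l
      (𝓝 (‖f‖ * ((∫⁻ x, g x ∂μ).toReal - (∫⁻ x, min (g x) N ∂μ).toReal))) :=
    (((ENNReal.tendsto_toReal hfin).comp hlim).sub
      (by simpa only [integral_truncToReal] using hweak (truncToReal hg N))).const_mul _
  filter_upwards [hgap_tendsto.eventually (gt_mem_nhds hN),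
    hlim.eventually (gt_mem_nhds hfin.lt_top),
    Metric.tendsto_nhds.1 (hweak (truncToReal hg N * f)) (ε / 3) (by positivity)]
    with i hgap_i hfin_i hweak_i
  have herr_i := abs_integral_toReal_mul_sub_integral_min_le hg.measurable hfin_i.ne
    f.continuous.aestronglyMeasurable f.norm_coe_le_norm N
  have herr := abs_integral_toReal_mul_sub_integral_min_le hg.measurable hfin
    f.continuous.aestronglyMeasurable f.norm_coe_le_norm N
  simp only [BoundedContinuousFunction.coe_mul, Pi.mul_apply, truncToReal_apply,
    Real.dist_eq] at hweak_i
  rw [Real.dist_eq, abs_lt]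
  rw [abs_le] at herr_i herr
  rw [abs_lt] at hweak_i
  constructor <;> linarith [herr_i.1, herr_i.2, herr.1, herr.2, hweak_i.1, hweak_i.2]

end WeakPlus

lemma eq_dirac_top_of_lintegral_inv_eq_zero (μ : Measure ℝ≥0∞) [IsProbabilityMeasure μ]
    (h : ∫⁻ x, x⁻¹ ∂μ = 0) : μ = Measure.dirac ∞ := by
  have hae : ∀ᵐ x ∂μ, x ∈ ({∞} : Set ℝ≥0∞) := by
    filter_upwards [(lintegral_eq_zero_iff measurable_inv).1 h] with x hx
    simpa using hx
  have hone : μ {∞} = 1 := (prob_compl_eq_zero_iff (measurableSet_singleton ∞)).1 (ae_iff.1 hae)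
  rw [← Measure.restrict_eq_self_of_ae_mem hae, Measure.restrict_singleton, hone, one_smul]

lemma withDensity_finsetSum_measure {α ι : Type*} [MeasurableSpace α] (s : Finset ι)
    (μ : ι → Measure α) (f : α → ℝ≥0∞) :
    (∑ i ∈ s, μ i).withDensity f = ∑ i ∈ s, (μ i).withDensity f :=
  map_sum (⟨⟨(·.withDensity f), withDensity_zero_left f⟩,
    fun μ ν => withDensity_add_measure μ ν f⟩ : Measure α →+ Measure α) μ s

section Empirical

variable {m : ℕ → ℝ} {t : ℝ}

lemma one_le_ell (hdiv : Tendsto (Mpart m) atTop atTop) (ht : 0 < t) : 1 ≤ ell m t := by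
  refine Nat.one_le_iff_ne_zero.2 fun h0 => ht.not_ge ?_
  have hmem : t ≤ Mpart m (ell m t) := Nat.sInf_mem (hdiv.eventually_ge_atTop t).exists
  simpa [h0, Mpart] using hmem

lemma tbar_pos (hdiv : Tendsto (Mpart m) atTop atTop) (ht : 0 < t) : 0 < tbar m t :=
  sub_pos.2 (not_le.1 (Nat.notMem_of_lt_sInf (Nat.sub_lt (one_le_ell hdiv ht) one_pos)))

def empCount (m : ℕ → ℝ) (t : ℝ) : Measure ℝ≥0∞ :=
  Measure.dirac (ENNReal.ofReal (tbar m t)) +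
    ∑ k ∈ Finset.Icc 1 (ell m t - 1), Measure.dirac (ENNReal.ofReal (m k))

lemma empCount_univ (h : 1 ≤ ell m t) : empCount m t Set.univ = ell m t := by
  simpa [empCount] using add_tsub_cancel_of_le (mod_cast h : (1 : ℝ≥0∞) ≤ ell m t)

lemma withDensity_inv_empMass (hm : ∀ k, 0 < m k) (hdiv : Tendsto (Mpart m) atTop atTop)
    (ht : 0 < t) : (empMass m t).withDensity (·⁻¹) = (ENNReal.ofReal t)⁻¹ • empCount m t := by
  have hatom {a : ℝ} (ha : 0 < a) :
      (ENNReal.ofReal (a / t) • Measure.dirac (ENNReal.ofReal a)).withDensity (·⁻¹) =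
        (ENNReal.ofReal t)⁻¹ • Measure.dirac (ENNReal.ofReal a) := by
    rw [withDensity_smul_measure, dirac_withDensity, smul_smul, ENNReal.ofReal_div_of_pos ht,
      div_eq_mul_inv, mul_right_comm,
      ENNReal.mul_inv_cancel (ENNReal.ofReal_pos.2 ha).ne' ENNReal.ofReal_ne_top, one_mul]
  rw [empMass, withDensity_add_measure, withDensity_finsetSum_measure, hatom (tbar_pos hdiv ht),
    Finset.sum_congr rfl fun k _ => hatom (hm k), ← Finset.smul_sum, ← smul_add, empCount]

lemma lintegral_inv_empMass (hm : ∀ k, 0 < m k) (hdiv : Tendsto (Mpart m) atTop atTop)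
    (ht : 0 < t) : ∫⁻ x, x⁻¹ ∂(empMass m t) = ENNReal.ofReal ((ell m t : ℝ) / t) := by
  rw [← setLIntegral_univ, ← withDensity_apply _ MeasurableSet.univ,
    withDensity_inv_empMass hm hdiv ht, Measure.smul_apply, empCount_univ (one_le_ell hdiv ht),
    smul_eq_mul, ENNReal.ofReal_div_of_pos ht, ENNReal.ofReal_natCast, div_eq_mul_inv, mul_comm]

lemma integral_empFreq (hm : ∀ k, 0 < m k) (hdiv : Tendsto (Mpart m) atTop atTop)
    (ht : 0 < t) (f : ℝ≥0∞ → ℝ) :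
    ∫ x, f x ∂(empFreq m t) = t / ell m t * ∫ x, x⁻¹.toReal * f x ∂(empMass m t) := by
  have hfreq : empFreq m t =
      ((ell m t : ℝ≥0∞)⁻¹ * ENNReal.ofReal t) • (empMass m t).withDensity (·⁻¹) := by
    rw [withDensity_inv_empMass hm hdiv ht, smul_smul, mul_assoc,
      ENNReal.mul_inv_cancel (ENNReal.ofReal_pos.2 ht).ne' ENNReal.ofReal_ne_top, mul_one]
    rfl
  have hfin : ∀ᵐ x ∂(empMass m t), x⁻¹ < ∞ := by
    refine ae_lt_top measurable_inv ?_
    rw [lintegral_inv_empMass hm hdiv ht]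
    exact ENNReal.ofReal_ne_top
  rw [hfreq, integral_smul_measure,
    integral_withDensity_eq_integral_toReal_smul measurable_inv hfin]
  simp [ENNReal.toReal_mul, ht.le, div_eq_inv_mul]

end Empirical

/-- w⁺ regularity of the empirical mass measures implies weak convergence of the
frequencies: if `ℓ_t/t → A`, `μ_t → μ_*` weakly with convergence of the integrals of
`1/m` (`w⁺`), and `μ_* ≠ δ_∞`, then `A ∈ (0,∞)` and `F_t` converges weakly to `F_*`
with `⟨F_*, f⟩ = (1/A) ∫ (1/m) f(m) dμ_*(m)`. -/
theorem wplus_implies_frequency_convergence (m : ℕ → ℝ) (hm : ∀ k, 0 < m k)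
    (hdiv : Tendsto (Mpart m) atTop atTop)
    (A : ℝ≥0∞)
    (hA : Tendsto (fun t : ℝ => ENNReal.ofReal ((ell m t : ℝ) / t)) atTop (𝓝 A))
    (mustar : Measure ℝ≥0∞) [IsProbabilityMeasure mustar]
    (hweak : ∀ f : ℝ≥0∞ → ℝ, Continuous f →
      Tendsto (fun t : ℝ => ∫ x, f x ∂(empMass m t)) atTop (𝓝 (∫ x, f x ∂mustar)))
    (hwplus : Tendsto (fun t : ℝ => ∫⁻ x, x⁻¹ ∂(empMass m t)) atTop
      (𝓝 (∫⁻ x, x⁻¹ ∂mustar)))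
    (hfin : ∫⁻ x, x⁻¹ ∂mustar < ⊤)
    (hne : mustar ≠ Measure.dirac ⊤) :
    A ≠ 0 ∧ A ≠ ⊤ ∧
    ∀ f : ℝ≥0∞ → ℝ, Continuous f →
      Tendsto (fun t : ℝ => ∫ x, f x ∂(empFreq m t)) atTop
        (𝓝 ((1 / A.toReal) * ∫ x, (x.toReal)⁻¹ * f x ∂mustar)) := by
  have hell : ∀ᶠ t in atTop,
      ENNReal.ofReal ((ell m t : ℝ) / t) = ∫⁻ x, x⁻¹ ∂(empMass m t) :=
    (eventually_gt_atTop 0).mono fun t ht => (lintegral_inv_empMass hm hdiv ht).symm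
  have hAeq : A = ∫⁻ x, x⁻¹ ∂mustar := tendsto_nhds_unique (hA.congr' hell) hwplus
  have hA0 : A ≠ 0 := fun h0 => hne (eq_dirac_top_of_lintegral_inv_eq_zero mustar (hAeq ▸ h0))
  have hAtop : A ≠ ⊤ := hAeq ▸ hfin.ne
  refine ⟨hA0, hAtop, fun f hf => ?_⟩
  have hmass : Tendsto (fun t => ∫ x, x⁻¹.toReal * f x ∂(empMass m t)) atTop
      (𝓝 (∫ x, x⁻¹.toReal * f x ∂mustar)) :=
    tendsto_integral_toReal_mul_of_tendsto_lintegral (fun g => hweak g g.continuous)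
      continuous_inv hwplus hfin.ne (.mkOfCompact ⟨f, hf⟩)
  have hratio : Tendsto (fun t : ℝ => t / ell m t) atTop (𝓝 (1 / A.toReal)) := by
    rw [one_div]
    refine (((ENNReal.tendsto_toReal hAtop).comp hA).inv₀
      (ENNReal.toReal_ne_zero.2 ⟨hA0, hAtop⟩)).congr' ?_
    filter_upwards [eventually_gt_atTop 0] with t ht
    simp [ENNReal.toReal_ofReal (div_nonneg (Nat.cast_nonneg _) ht.le)]
  simp only [← ENNReal.toReal_inv]
  exact (hratio.mul hmass).congr'
    ((eventually_gt_atTop 0).mono fun t ht => (integral_empFreq hm hdiv ht f).symm)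
end
end

section
/- (Cèsaro divergent masses are regular.) If the mass sequence m_k > 0 satisfies (m_1 + … + m_n)/n → ∞, then the empirical mass measures μ_t converge weakly on [0,∞] to δ_∞; i.e., for every a > 0, μ_t([0,a]) → 0 as t → ∞. -/
open MeasureTheory ProbabilityTheory Filter
open scoped ENNReal Topology BigOperators

noncomputable section

/-! Each atom of `μ_t` at a point `r ≤ a` carries mass `r / t ≤ a / t`, and there are at most
`ℓ_t + 1` atoms, so `μ_t([0,a]) ≤ a (ℓ_t + 1) / t`. Cèsaro divergence makes `ℓ_t = o(t)`:
the completed increments before time `t` have total mass `M_{ℓ_t - 1} < t`, while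
`M_n ≥ n / ε` for large `n`. -/

lemma Mpart_ell_sub_one_lt (m : ℕ → ℝ) {t : ℝ} (ht : 0 < t) : Mpart m (ell m t - 1) < t := by
  rcases Nat.eq_zero_or_pos (ell m t) with h0 | hpos
  · simpa [h0, Mpart] using ht
  · exact not_le.mp (Nat.notMem_of_lt_sInf (Nat.sub_lt hpos one_pos))

lemma exists_natCast_le_max_of_tendsto_div_atTop {u : ℕ → ℝ}
    (hu : Tendsto (fun n : ℕ => u n / n) atTop atTop) {ε : ℝ} (hε : 0 < ε) :
    ∃ N : ℕ, ∀ n : ℕ, (n : ℝ) ≤ max (N : ℝ) (ε * u n) := by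
  obtain ⟨N, hN⟩ := eventually_atTop.mp
    ((hu.eventually_ge_atTop ε⁻¹).and (eventually_gt_atTop 0))
  refine ⟨N, fun n => ?_⟩
  rcases lt_or_ge n N with hn | hn
  · exact le_max_of_le_left (by exact_mod_cast hn.le)
  · obtain ⟨hun, hn0⟩ := hN n hn
    have hn0 : (0 : ℝ) < n := by exact_mod_cast hn0
    rw [le_div_iff₀ hn0, inv_mul_le_iff₀ hε] at hun
    exact le_max_of_le_right hun

lemma tendsto_ell_div_atTop_zero (m : ℕ → ℝ)
    (hces : Tendsto (fun n : ℕ => Mpart m n / n) atTop atTop) :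
    Tendsto (fun t : ℝ => (ell m t : ℝ) / t) atTop (𝓝 0) := by
  rw [tendsto_order]
  refine ⟨fun b hb => ?_, fun b hb => ?_⟩
  · filter_upwards [eventually_gt_atTop 0] with t ht
    exact hb.trans_le (by positivity)
  · obtain ⟨N, hN⟩ := exists_natCast_le_max_of_tendsto_div_atTop hces (half_pos hb)
    filter_upwards [eventually_gt_atTop (2 * (N + 1) / b)] with t ht
    have ht0 : 0 < t := lt_of_le_of_lt (by positivity) ht
    have hNt : 2 * ((N : ℝ) + 1) < b * t := by rwa [div_lt_iff₀' hb] at ht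
    have hell : (ell m t : ℝ) ≤ (ell m t - 1 : ℕ) + 1 := by
      exact_mod_cast (by omega : ell m t ≤ ell m t - 1 + 1)
    have hprev : ((ell m t - 1 : ℕ) : ℝ) ≤ max (N : ℝ) (b / 2 * t) :=
      (hN _).trans (max_le_max le_rfl (by gcongr; exact (Mpart_ell_sub_one_lt m ht0).le))
    rw [div_lt_iff₀ ht0]
    rcases le_max_iff.mp hprev with h | h <;> linarith

lemma smul_dirac_Iic_le {r t : ℝ} (ht : 0 ≤ t) (a : ℝ) :
    (ENNReal.ofReal (r / t) • Measure.dirac (ENNReal.ofReal r)) (Set.Iic (ENNReal.ofReal a))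
      ≤ ENNReal.ofReal (a / t) := by
  rw [Measure.smul_apply, Measure.dirac_apply' _ measurableSet_Iic, smul_eq_mul]
  by_cases hr : ENNReal.ofReal r ∈ Set.Iic (ENNReal.ofReal a)
  · rw [Set.indicator_of_mem hr, Pi.one_apply, mul_one, ENNReal.ofReal_le_ofReal_iff']
    rcases ENNReal.ofReal_le_ofReal_iff'.mp (Set.mem_Iic.mp hr) with h | h
    · exact .inl (by gcongr)
    · exact .inr (div_nonpos_of_nonpos_of_nonneg h ht)
  · rw [Set.indicator_of_notMem hr, mul_zero]
    exact zero_le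

lemma empMass_Iic_le (m : ℕ → ℝ) {t : ℝ} (ht : 0 < t) (a : ℝ) :
    empMass m t (Set.Iic (ENNReal.ofReal a)) ≤ ENNReal.ofReal (a * ((ell m t + 1) / t)) := by
  calc empMass m t (Set.Iic (ENNReal.ofReal a))
      ≤ ENNReal.ofReal (a / t) + ∑ _k ∈ Finset.Icc 1 (ell m t - 1), ENNReal.ofReal (a / t) := by
        rw [empMass, Measure.add_apply, Measure.finsetSum_apply]
        gcongr <;> exact smul_dirac_Iic_le ht.le a
    _ ≤ (ell m t + 1) * ENNReal.ofReal (a / t) := by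
        rw [Finset.sum_const, Nat.card_Icc, Nat.add_sub_cancel, nsmul_eq_mul, add_comm,
          ← add_one_mul]
        gcongr
        exact_mod_cast Nat.sub_le _ 1
    _ = ENNReal.ofReal (a * ((ell m t + 1) / t)) := by
        rw [mul_div_left_comm, ENNReal.ofReal_mul (by positivity)]
        norm_cast

theorem cesaro_divergent_regular_general (m : ℕ → ℝ)
    (hces : Tendsto (fun n : ℕ => Mpart m n / n) atTop atTop) :
    ∀ a > (0:ℝ), Tendsto (fun t : ℝ => empMass m t (Set.Iic (ENNReal.ofReal a)))
      atTop (𝓝 0) := by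
  intro a _
  have hlim : Tendsto (fun t : ℝ => a * ((ell m t + 1) / t)) atTop (𝓝 0) := by
    simpa [add_div] using
      ((tendsto_ell_div_atTop_zero m hces).add tendsto_inv_atTop_zero).const_mul a
  refine tendsto_of_tendsto_of_tendsto_of_le_of_le' tendsto_const_nhds
    (by simpa using ENNReal.tendsto_ofReal hlim) (.of_forall fun _ => zero_le) ?_
  filter_upwards [eventually_gt_atTop 0] with t ht using empMass_Iic_le m ht a

/-- Cèsaro divergent masses are regular: if `(m_1 + … + m_n)/n → ∞`, then
`μ_t → δ_∞` weakly, i.e. `μ_t([0,a]) → 0` for every `a > 0`. -/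
theorem cesaro_divergent_regular (m : ℕ → ℝ) (hm : ∀ k, 0 < m k)
    (hces : Tendsto (fun n : ℕ => Mpart m n / n) atTop atTop) :
    ∀ a > (0:ℝ), Tendsto (fun t : ℝ => empMass m t (Set.Iic (ENNReal.ofReal a)))
      atTop (𝓝 0) :=
  cesaro_divergent_regular_general m hces
end
end
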